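/- Let u₀ be a smooth, compactly supported, divergence-free vector field on ℝ^d and let P be a polynomial of degree at most 2. Then ∫_{ℝ^d} P(x) ∂_j(tr((du₀)²)) dx = 0 for every 1 ≤ j ≤ d. -/

import Mathlib

noncomputable section
open MeasureTheory

abbrev E (d : ℕ) := EuclideanSpace ℝ (Fin d)

/-- The `j`-th partial derivative. -/
noncomputable def pd {d : ℕ} {F : Type*} [NormedAddCommGroup F] [NormedSpace ℝ F]
    (j : Fin d) (f : E d → F) (x : E d) : F :=
  fderiv ℝ f x (EuclideanSpace.single j 1)

/-- `tr((du₀)²) = Σ_{α,β} (∂_β u₀α)(∂_α u₀β)`. -/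
noncomputable def trSq {d : ℕ} (u₀ : E d → E d) (x : E d) : ℝ :=
  ∑ a : Fin d, ∑ b : Fin d,
    pd b (fun z => u₀ z a) x * pd a (fun z => u₀ z b) x

namespace Aux

variable {d : ℕ}

lemma top_add_one : ((⊤:ℕ∞) : WithTop ℕ∞) + 1 ≤ ((⊤:ℕ∞) : WithTop ℕ∞) := by simp

lemma one_le_top : (1 : WithTop ℕ∞) ≤ ((⊤:ℕ∞) : WithTop ℕ∞) := by
  exact_mod_cast (le_top : (1:ℕ∞) ≤ ⊤)

lemma top_ne_zero' : ((⊤:ℕ∞) : WithTop ℕ∞) ≠ 0 := by simp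

lemma two_le_top : (2 : WithTop ℕ∞) ≤ ((⊤:ℕ∞) : WithTop ℕ∞) := by
  have : ((2:ℕ∞) : WithTop ℕ∞) ≤ ((⊤:ℕ∞) : WithTop ℕ∞) := WithTop.coe_le_coe.mpr le_top
  simpa using this

lemma pd_smooth {f : E d → ℝ} (hf : ContDiff ℝ (⊤:ℕ∞) f) (j : Fin d) :
    ContDiff ℝ (⊤:ℕ∞) (pd j f) :=
  (hf.fderiv_right (m := (⊤:ℕ∞)) top_add_one).clm_apply contDiff_const

lemma pd_supp {f : E d → ℝ} (hc : HasCompactSupport f) (j : Fin d) :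
    HasCompactSupport (pd j f) :=
  hc.fderiv_apply ℝ (EuclideanSpace.single j 1)

lemma hcs_sum {ι : Type*} (s : Finset ι) (f : ι → E d → ℝ)
    (h : ∀ i ∈ s, HasCompactSupport (f i)) :
    HasCompactSupport (fun x => ∑ i ∈ s, f i x) := by
  classical
  induction s using Finset.cons_induction with
  | empty => simp only [Finset.sum_empty]; exact HasCompactSupport.zero
  | cons i s hi ih =>
      have h2 : (fun x => ∑ k ∈ Finset.cons i s hi, f k x)
          = (fun x => f i x + ∑ k ∈ s, f k x) := by ext x; rw [Finset.sum_cons]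
      rw [h2]
      exact (h i (Finset.mem_cons_self i s)).add
        (ih fun k hk => h k (Finset.mem_cons_of_mem hk))

/-- Integration by parts. -/
lemma parts {f g : E d → ℝ} (v : E d) (hf : ContDiff ℝ (⊤:ℕ∞) f) (hg : ContDiff ℝ (⊤:ℕ∞) g)
    (hgc : HasCompactSupport g) :
    ∫ x, f x * fderiv ℝ g x v = - ∫ x, fderiv ℝ f x v * g x := by
  have cg' : Continuous fun x => fderiv ℝ g x v :=
    ((hg.fderiv_right (m := (⊤:ℕ∞)) top_add_one).continuous).clm_apply continuous_const
  have cf' : Continuous fun x => fderiv ℝ f x v :=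
    ((hf.fderiv_right (m := (⊤:ℕ∞)) top_add_one).continuous).clm_apply continuous_const
  have hgc' : HasCompactSupport fun x => fderiv ℝ g x v := hgc.fderiv_apply ℝ v
  exact integral_mul_fderiv_eq_neg_fderiv_mul_of_integrable
    ((cf'.mul hg.continuous).integrable_of_hasCompactSupport hgc.mul_left)
    ((hf.continuous.mul cg').integrable_of_hasCompactSupport hgc'.mul_left)
    ((hf.continuous.mul hg.continuous).integrable_of_hasCompactSupport hgc.mul_left)
    (fun x _ => (hf.differentiable top_ne_zero') x) (fun x _ => (hg.differentiable top_ne_zero') x)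

lemma parts_pd {f g : E d → ℝ} (j : Fin d) (hf : ContDiff ℝ (⊤:ℕ∞) f)
    (hg : ContDiff ℝ (⊤:ℕ∞) g) (hgc : HasCompactSupport g) :
    ∫ x, f x * pd j g x = - ∫ x, fderiv ℝ f x (EuclideanSpace.single j 1) * g x :=
  parts _ hf hg hgc

/-- The integral of a partial derivative of a compactly supported function vanishes. -/
lemma int_pd {g : E d → ℝ} (j : Fin d) (hg : ContDiff ℝ (⊤:ℕ∞) g)
    (hgc : HasCompactSupport g) : ∫ x, pd j g x = 0 := by
  have h := parts_pd j (f := fun _ => (1:ℝ)) contDiff_const hg hgc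
  simpa [fderiv_const] using h

/-- Schwarz symmetry for `pd`. -/
lemma pd_comm {f : E d → ℝ} (hf : ContDiff ℝ (⊤:ℕ∞) f) (a b : Fin d) (x : E d) :
    pd a (pd b f) x = pd b (pd a f) x := by
  have hdf : ∀ y, DifferentiableAt ℝ (fderiv ℝ f) y := fun y =>
    ((hf.fderiv_right (m := (⊤:ℕ∞)) top_add_one).differentiable top_ne_zero') y
  have key : ∀ (c : Fin d) (w : E d), pd c (fun y => fderiv ℝ f y w) x
      = fderiv ℝ (fderiv ℝ f) x (EuclideanSpace.single c 1) w := by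
    intro c w
    unfold pd
    rw [fderiv_clm_apply (hdf x) (differentiableAt_const _)]
    simp
  have hsymm : IsSymmSndFDerivAt ℝ f x :=
    ContDiffAt.isSymmSndFDerivAt (hf.contDiffAt) (by rw [minSmoothness_of_isRCLikeNormedField]; exact two_le_top)
  show pd a (fun y => fderiv ℝ f y (EuclideanSpace.single b 1)) x = _
  rw [key a (EuclideanSpace.single b 1), hsymm.eq]
  exact (key b (EuclideanSpace.single a 1)).symm

lemma pd_finset_sum {ι : Type*} (s : Finset ι) (f : ι → E d → ℝ)
    (hf : ∀ i, ContDiff ℝ (⊤:ℕ∞) (f i)) (a : Fin d) (x : E d) :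
    pd a (fun y => ∑ i ∈ s, f i y) x = ∑ i ∈ s, pd a (f i) x := by
  unfold pd
  rw [fderiv_fun_sum (fun i _ => ((hf i).differentiable top_ne_zero') x)]
  simp

section Vec

variable {u₀ : E d → E d}

lemma U_smooth (hsm : ContDiff ℝ (⊤:ℕ∞) u₀) (a : Fin d) :
    ContDiff ℝ (⊤:ℕ∞) (fun x => u₀ x a) :=
  (((EuclideanSpace.proj a : E d →L[ℝ] ℝ)).contDiff.comp hsm : )

lemma U_supp (hsupp : HasCompactSupport u₀) (a : Fin d) :
    HasCompactSupport (fun x => u₀ x a) :=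
  hsupp.comp_left (g := fun v : E d => v a) rfl

lemma schwarz_div (hsm : ContDiff ℝ (⊤:ℕ∞) u₀)
    (hdiv : ∀ x, ∑ b : Fin d, pd b (fun y => u₀ y b) x = 0) (a : Fin d) (x : E d) :
    ∑ b : Fin d, pd b (pd a (fun y => u₀ y b)) x = 0 := by
  have h1 : ∀ b, pd b (pd a (fun y => u₀ y b)) x = pd a (pd b (fun y => u₀ y b)) x :=
    fun b => pd_comm (U_smooth hsm b) b a x
  simp_rw [h1]
  rw [← pd_finset_sum Finset.univ (fun b y => pd b (fun z => u₀ z b) y)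
    (fun b => pd_smooth (U_smooth hsm b) b) a x]
  have h2 : (fun y => ∑ b : Fin d, pd b (fun z => u₀ z b) y) = fun _ => (0:ℝ) := by
    funext y; exact hdiv y
  rw [h2]
  unfold pd
  simp [fderiv_const]

lemma trSq_smooth (hsm : ContDiff ℝ (⊤:ℕ∞) u₀) : ContDiff ℝ (⊤:ℕ∞) (trSq u₀) := by
  unfold trSq
  apply ContDiff.sum; intro a _
  apply ContDiff.sum; intro b _
  exact (pd_smooth (U_smooth hsm a) b).mul (pd_smooth (U_smooth hsm b) a)

lemma trSq_supp (hsupp : HasCompactSupport u₀) : HasCompactSupport (trSq u₀) := by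
  unfold trSq
  apply hcs_sum; intro a _
  apply hcs_sum; intro b _
  exact (pd_supp (U_supp hsupp a) b).mul_right

/-- `∑_a ∫ ∂_a u_i · u_a = 0`. -/
lemma moment_aux (hsm : ContDiff ℝ (⊤:ℕ∞) u₀) (hsupp : HasCompactSupport u₀)
    (hdiv : ∀ x, ∑ b : Fin d, pd b (fun y => u₀ y b) x = 0) (i : Fin d) :
    ∑ a : Fin d, ∫ x, pd a (fun y => u₀ y i) x * (u₀ x a) = 0 := by
  have h : ∀ a : Fin d, ∫ x, pd a (fun y => u₀ y i) x * (u₀ x a)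
      = - ∫ x, pd a (fun y => u₀ y a) x * (u₀ x i) := by
    intro a
    have := parts_pd a (U_smooth hsm a) (U_smooth hsm i) (U_supp hsupp i)
    simp only [pd] at this ⊢
    rw [← this]
    congr 1; funext x; ring
  simp_rw [h]
  rw [Finset.sum_neg_distrib, ← integral_finset_sum _ (f := fun a x => pd a (fun y => u₀ y a) x * u₀ x i) (fun a _ =>
    ((pd_smooth (U_smooth hsm a) a).continuous.mul
      (U_smooth hsm i).continuous).integrable_of_hasCompactSupport
      (U_supp hsupp i).mul_left)]
  have h0 : ∀ x : E d, ∑ a : Fin d, pd a (fun y => u₀ y a) x * (u₀ x i) = 0 := by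
    intro x; rw [← Finset.sum_mul, hdiv x, zero_mul]
  simp_rw [h0]
  simp

lemma coord_smooth (i : Fin d) : ContDiff ℝ (⊤:ℕ∞) (fun y : E d => y i) :=
  ((EuclideanSpace.proj i : E d →L[ℝ] ℝ).contDiff : )

lemma fderiv_coord (i : Fin d) (x v : E d) : fderiv ℝ (fun y : E d => y i) x v = v i := by
  have h : fderiv ℝ (fun y : E d => y i) x = (EuclideanSpace.proj i : E d →L[ℝ] ℝ) :=
    (EuclideanSpace.proj i : E d →L[ℝ] ℝ).fderiv
  rw [h]; rfl

lemma fderiv_coord_mul {h : E d → ℝ} (hh : ContDiff ℝ (⊤:ℕ∞) h) (i : Fin d) (x v : E d) :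
    fderiv ℝ (fun y => y i * h y) x v = v i * h x + x i * fderiv ℝ h x v := by
  have h1 : HasFDerivAt (fun y : E d => y i) (EuclideanSpace.proj i : E d →L[ℝ] ℝ) x :=
    (EuclideanSpace.proj i : E d →L[ℝ] ℝ).hasFDerivAt
  have h2 : HasFDerivAt h (fderiv ℝ h x) x := (hh.differentiable top_ne_zero' x).hasFDerivAt
  rw [HasFDerivAt.fderiv (f := fun y => y i * h y) (h1.mul' h2)]
  have : (EuclideanSpace.proj i : E d →L[ℝ] ℝ) v = v i := rfl
  simp [this]
  ring

/-- `∫ trSq u₀ = 0`. -/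
lemma main0 (hsm : ContDiff ℝ (⊤:ℕ∞) u₀) (hsupp : HasCompactSupport u₀)
    (hdiv : ∀ x, ∑ b : Fin d, pd b (fun y => u₀ y b) x = 0) :
    ∫ x, trSq u₀ x = 0 := by
  have hint : ∀ a b : Fin d, Integrable
      (fun x => pd b (fun z => u₀ z a) x * pd a (fun z => u₀ z b) x) := fun a b =>
    ((pd_smooth (U_smooth hsm a) b).continuous.mul
      (pd_smooth (U_smooth hsm b) a).continuous).integrable_of_hasCompactSupport
      (pd_supp (U_supp hsupp a) b).mul_right
  unfold trSq
  rw [integral_finset_sum _ (fun a _ => integrable_finset_sum _ (fun b _ => hint a b))]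
  have key : ∀ a b : Fin d, ∫ x, pd b (fun z => u₀ z a) x * pd a (fun z => u₀ z b) x
      = - ∫ x, pd b (pd a (fun z => u₀ z b)) x * u₀ x a := by
    intro a b
    have := parts_pd b (pd_smooth (U_smooth hsm b) a) (U_smooth hsm a) (U_supp hsupp a)
    simp only [pd] at this ⊢
    rw [← this]
    congr 1; funext x; ring
  have haj : ∀ a : Fin d, ∑ b : Fin d,
      ∫ x, pd b (fun z => u₀ z a) x * pd a (fun z => u₀ z b) x = 0 := by
    intro a
    simp_rw [key a, Finset.sum_neg_distrib]
    rw [← integral_finset_sum _ (f := fun b x => pd b (pd a (fun z => u₀ z b)) x * u₀ x a) (fun b _ =>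
      ((pd_smooth (pd_smooth (U_smooth hsm b) a) b).continuous.mul
        (U_smooth hsm a).continuous).integrable_of_hasCompactSupport
        (U_supp hsupp a).mul_left)]
    have h0 : ∀ x : E d, ∑ b : Fin d, pd b (pd a (fun z => u₀ z b)) x * u₀ x a = 0 := by
      intro x; rw [← Finset.sum_mul, schwarz_div hsm hdiv a x, zero_mul]
    simp_rw [h0]
    simp
  refine Finset.sum_eq_zero (fun a _ => ?_)
  rw [integral_finset_sum _ (fun b _ => hint a b)]
  exact haj a

/-- `∫ xᵢ · trSq u₀ = 0`. -/
lemma main1 (hsm : ContDiff ℝ (⊤:ℕ∞) u₀) (hsupp : HasCompactSupport u₀)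
    (hdiv : ∀ x, ∑ b : Fin d, pd b (fun y => u₀ y b) x = 0) (i : Fin d) :
    ∫ x, x i * trSq u₀ x = 0 := by
  have hint : ∀ a b : Fin d, Integrable
      (fun x => x i * (pd b (fun z => u₀ z a) x * pd a (fun z => u₀ z b) x)) := fun a b =>
    ((coord_smooth i).continuous.mul
      ((pd_smooth (U_smooth hsm a) b).continuous.mul
      (pd_smooth (U_smooth hsm b) a).continuous)).integrable_of_hasCompactSupport
      ((pd_supp (U_supp hsupp a) b).mul_right).mul_left
  have expand : (fun x : E d => x i * trSq u₀ x)
      = fun x => ∑ a : Fin d, ∑ b : Fin d,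
          x i * (pd b (fun z => u₀ z a) x * pd a (fun z => u₀ z b) x) := by
    funext x
    unfold trSq
    rw [Finset.mul_sum]
    exact Finset.sum_congr rfl (fun a _ => by rw [Finset.mul_sum])
  rw [expand, integral_finset_sum _ (fun a _ => integrable_finset_sum _ (fun b _ => hint a b))]
  -- integrate by parts each term
  have key : ∀ a b : Fin d,
      ∫ x, x i * (pd b (fun z => u₀ z a) x * pd a (fun z => u₀ z b) x)
      = - ∫ x, (EuclideanSpace.single b 1 i * pd a (fun z => u₀ z b) x
          + x i * pd b (pd a (fun z => u₀ z b)) x) * u₀ x a := by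
    intro a b
    have hf : ContDiff ℝ (⊤:ℕ∞) (fun x : E d => x i * pd a (fun z => u₀ z b) x) :=
      (coord_smooth i).mul (pd_smooth (U_smooth hsm b) a)
    have h := parts_pd b hf (U_smooth hsm a) (U_supp hsupp a)
    have hl : ∫ x, x i * (pd b (fun z => u₀ z a) x * pd a (fun z => u₀ z b) x)
        = ∫ x, (x i * pd a (fun z => u₀ z b) x) * pd b (fun z => u₀ z a) x := by
      congr 1; funext x; ring
    rw [hl, h]
    congr 1
    apply integral_congr_ae
    filter_upwards with x
    rw [fderiv_coord_mul (pd_smooth (U_smooth hsm b) a) i x (EuclideanSpace.single b 1)]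
    rfl
  -- collapse the inner sums
  have collapse : ∀ a : Fin d, ∑ b : Fin d,
      -∫ x, (EuclideanSpace.single b 1 i * pd a (fun z => u₀ z b) x
          + x i * pd b (pd a (fun z => u₀ z b)) x) * u₀ x a
      = - ∫ x, pd a (fun y => u₀ y i) x * u₀ x a := by
    intro a
    rw [Finset.sum_neg_distrib, ← integral_finset_sum]
    · congr 1
      apply integral_congr_ae
      filter_upwards with x
      have h1 : ∑ b : Fin d, (EuclideanSpace.single b 1 i * pd a (fun z => u₀ z b) x
          + x i * pd b (pd a (fun z => u₀ z b)) x) * u₀ x a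
          = (∑ b : Fin d, EuclideanSpace.single b 1 i * pd a (fun z => u₀ z b) x) * u₀ x a
          + (x i * ∑ b : Fin d, pd b (pd a (fun z => u₀ z b)) x) * u₀ x a := by
        simp_rw [add_mul]
        rw [Finset.sum_add_distrib, Finset.sum_mul, Finset.mul_sum, Finset.sum_mul]
      rw [h1, schwarz_div hsm hdiv a x]
      have h2 : ∑ b : Fin d, EuclideanSpace.single b 1 i * pd a (fun z => u₀ z b) x
          = pd a (fun z => u₀ z i) x := by
        have : ∀ b : Fin d, EuclideanSpace.single b 1 i * pd a (fun z => u₀ z b) x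
            = (if i = b then pd a (fun z => u₀ z b) x else 0) := by
          intro b
          rw [EuclideanSpace.single_apply]
          split <;> simp_all
        simp_rw [this]
        simp
      rw [h2]
      ring
    · intro b _
      apply Continuous.integrable_of_hasCompactSupport
      · exact ((continuous_const.mul (pd_smooth (U_smooth hsm b) a).continuous).add
          ((coord_smooth i).continuous.mul
            (pd_smooth (pd_smooth (U_smooth hsm b) a) b).continuous)).mul
          (U_smooth hsm a).continuous
      · exact (U_supp hsupp a).mul_left
  have step1 : ∀ a : Fin d, (∫ x, ∑ b : Fin d,
      x i * (pd b (fun z => u₀ z a) x * pd a (fun z => u₀ z b) x))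
      = ∑ b : Fin d, ∫ x, x i * (pd b (fun z => u₀ z a) x * pd a (fun z => u₀ z b) x) :=
    fun a => integral_finset_sum _ (fun b _ => hint a b)
  have step2 : (∑ a : Fin d, ∫ x, ∑ b : Fin d,
      x i * (pd b (fun z => u₀ z a) x * pd a (fun z => u₀ z b) x))
      = ∑ a : Fin d, - ∫ x, pd a (fun y => u₀ y i) x * u₀ x a :=
    Finset.sum_congr rfl (fun a _ => ((step1 a).trans
      (Finset.sum_congr rfl (fun b _ => key a b))).trans (collapse a))
  rw [step2, Finset.sum_neg_distrib, neg_eq_zero]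
  exact moment_aux hsm hsupp hdiv i

end Vec

/-- Classification of monomials of total degree at most 2. -/
lemma classify (m : Fin d →₀ ℕ) (hm : (m.sum fun _ e => e) ≤ 2) :
    m = 0 ∨ (∃ a, m = Finsupp.single a 1)
      ∨ ∃ a b, m = Finsupp.single a 1 + Finsupp.single b 1 := by
  have hc : Multiset.card (Finsupp.toMultiset m) ≤ 2 := by
    rw [Finsupp.card_toMultiset]; exact hm
  have h2 : Multiset.card (Finsupp.toMultiset m) = 0
      ∨ Multiset.card (Finsupp.toMultiset m) = 1
      ∨ Multiset.card (Finsupp.toMultiset m) = 2 := by omega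
  have hm0 : Multiset.toFinsupp (Finsupp.toMultiset m) = m := Multiset.toFinsupp_eq_iff.mpr rfl
  rcases h2 with h|h|h
  · left
    rw [← hm0, Multiset.card_eq_zero.mp h, Multiset.toFinsupp_zero]
  · right; left
    obtain ⟨a, ha⟩ := Multiset.card_eq_one.mp h
    exact ⟨a, by rw [← hm0, ha, Multiset.toFinsupp_singleton]⟩
  · right; right
    obtain ⟨a, b, hab⟩ := Multiset.card_eq_two.mp h
    refine ⟨a, b, ?_⟩
    have hab' : ({a, b} : Multiset (Fin d)) = {a} + {b} := by
      simp [Multiset.insert_eq_cons, Multiset.singleton_add]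
    rw [← hm0, hab, hab', Multiset.toFinsupp_add, Multiset.toFinsupp_singleton,
      Multiset.toFinsupp_singleton]

lemma prod_single (a : Fin d) (x : E d) :
    (∏ i : Fin d, x i ^ (Finsupp.single a 1 : Fin d →₀ ℕ) i) = x a := by
  simp [Finsupp.single_apply, pow_ite]

lemma prod_pair (a b : Fin d) (x : E d) :
    (∏ i : Fin d, x i ^ ((Finsupp.single a 1 + Finsupp.single b 1) : Fin d →₀ ℕ) i)
      = x a * x b := by
  simp only [Finsupp.add_apply, pow_add, Finset.prod_mul_distrib]
  rw [prod_single, prod_single]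

lemma van1 {g : E d → ℝ} (hg : ContDiff ℝ (⊤:ℕ∞) g) (hgc : HasCompactSupport g)
    (h0 : ∫ x, g x = 0) (a j : Fin d) : ∫ x : E d, x a * pd j g x = 0 := by
  rw [parts_pd j (coord_smooth a) hg hgc, neg_eq_zero]
  have hrw : ∀ x : E d, fderiv ℝ (fun y : E d => y a) x (EuclideanSpace.single j 1) * g x
      = (EuclideanSpace.single j 1 a) * g x := by
    intro x; rw [fderiv_coord]
  simp_rw [hrw]
  rw [integral_const_mul, h0, mul_zero]

lemma van2 {g : E d → ℝ} (hg : ContDiff ℝ (⊤:ℕ∞) g) (hgc : HasCompactSupport g)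
    (h1 : ∀ i : Fin d, ∫ x, x i * g x = 0) (a b j : Fin d) :
    ∫ x : E d, (x a * x b) * pd j g x = 0 := by
  rw [parts_pd j ((coord_smooth a).mul (coord_smooth b)) hg hgc, neg_eq_zero]
  have hrw : ∀ x : E d, fderiv ℝ (fun y : E d => y a * y b) x (EuclideanSpace.single j 1) * g x
      = (EuclideanSpace.single j 1 a) * (x b * g x)
        + (EuclideanSpace.single j 1 b) * (x a * g x) := by
    intro x
    rw [fderiv_coord_mul (coord_smooth b) a x _, fderiv_coord]
    ring
  simp_rw [hrw]
  rw [integral_add, integral_const_mul, integral_const_mul, h1 a, h1 b, mul_zero, mul_zero,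
    add_zero]
  · exact (continuous_const.mul ((coord_smooth b).continuous.mul
      hg.continuous)).integrable_of_hasCompactSupport hgc.mul_left.mul_left
  · exact (continuous_const.mul ((coord_smooth a).continuous.mul
      hg.continuous)).integrable_of_hasCompactSupport hgc.mul_left.mul_left

lemma mono_vanish {g : E d → ℝ} (hg : ContDiff ℝ (⊤:ℕ∞) g) (hgc : HasCompactSupport g)
    (h0 : ∫ x, g x = 0) (h1 : ∀ i : Fin d, ∫ x, x i * g x = 0)
    (m : Fin d →₀ ℕ) (hm : (m.sum fun _ e => e) ≤ 2) (j : Fin d) :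
    ∫ x : E d, (∏ i : Fin d, x i ^ m i) * pd j g x = 0 := by
  rcases classify m hm with rfl | ⟨a, rfl⟩ | ⟨a, b, rfl⟩
  · have : ∀ x : E d, (∏ i : Fin d, x i ^ (0 : Fin d →₀ ℕ) i) * pd j g x = pd j g x := by
      intro x; simp
    simp_rw [this]
    exact int_pd j hg hgc
  · simp_rw [prod_single]
    exact van1 hg hgc h0 a j
  · simp_rw [prod_pair]
    exact van2 hg hgc h1 a b j

end Aux

open Aux in
/-- For a smooth compactly supported divergence-free vector field `u₀` on `ℝ^d`
and a polynomial `P` of degree at most `2`,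
`∫ P(x) ∂_j(tr((du₀)²)) dx = 0` for every `j`. -/
theorem statement3 (d : ℕ) (u₀ : E d → E d)
    (hsm : ContDiff ℝ (⊤ : ℕ∞) u₀) (hsupp : HasCompactSupport u₀)
    (hdiv : ∀ x, ∑ b : Fin d, pd b (fun y => u₀ y b) x = 0)
    (P : MvPolynomial (Fin d) ℝ) (hP : P.totalDegree ≤ 2) (j : Fin d) :
    ∫ x : E d, MvPolynomial.eval (fun i => x i) P * pd j (trSq u₀) x = 0 := by
  classical
  have hsm' : ContDiff ℝ (⊤:ℕ∞) u₀ := hsm.of_le (by simp)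
  have hg : ContDiff ℝ (⊤:ℕ∞) (trSq u₀) := trSq_smooth hsm'
  have hgc : HasCompactSupport (trSq u₀) := trSq_supp hsupp
  have h0 := main0 hsm' hsupp hdiv
  have h1 := main1 hsm' hsupp hdiv
  have expand : ∀ x : E d, MvPolynomial.eval (fun i => x i) P * pd j (trSq u₀) x
      = ∑ m ∈ P.support, (MvPolynomial.coeff m P * ∏ i : Fin d, (x i) ^ m i)
          * pd j (trSq u₀) x := by
    intro x
    rw [MvPolynomial.eval_eq', Finset.sum_mul]
  simp_rw [expand]
  have hintm : ∀ m ∈ P.support, Integrable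
      (fun x : E d => (MvPolynomial.coeff m P * ∏ i : Fin d, (x i) ^ m i)
        * pd j (trSq u₀) x) := by
    intro m _
    refine Continuous.integrable_of_hasCompactSupport ?_ (pd_supp hgc j).mul_left
    exact (continuous_const.mul (continuous_finset_prod _
      (fun i _ => ((coord_smooth i).continuous.pow _)))).mul (pd_smooth hg j).continuous
  rw [integral_finset_sum _ hintm]
  refine Finset.sum_eq_zero (fun m hm => ?_)
  have hdeg : (m.sum fun _ e => e) ≤ 2 := le_trans (MvPolynomial.le_totalDegree hm) hP
  have hre : ∀ x : E d, (MvPolynomial.coeff m P * ∏ i : Fin d, (x i) ^ m i)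
      * pd j (trSq u₀) x
      = MvPolynomial.coeff m P * ((∏ i : Fin d, (x i) ^ m i) * pd j (trSq u₀) x) := by
    intro x; ring
  simp_rw [hre]
  rw [integral_const_mul, mono_vanish hg hgc h0 h1 m hdeg j, mul_zero]
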